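/- Theorem (variant with scale invariance): a bibliometric index f satisfies monotonicity, uniform single citation, scale invariance, and uniform equivalence if and only if f is the rec-index. -/

import Mathlib

/-- A citation vector: a finite nonincreasing list of positive integers. -/
def CitVec (x : List ℕ) : Prop :=
  (∀ a ∈ x, 0 < a) ∧ List.Pairwise (· ≥ ·) x

/-- The rec-index: max over 1 ≤ i ≤ n of i·x_i (0 for the empty vector). -/
def recIdx (x : List ℕ) : ℕ :=
  ((List.range x.length).map (fun i => (i + 1) * x.getD i 0)).foldr max 0

/-- Domination: u ⊑ x. -/
def Dom (u x : List ℕ) : Prop :=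
  u.length ≤ x.length ∧ ∀ i < u.length, u.getD i 0 ≤ x.getD i 0

/-- Uniform: all entries equal. -/
def Uniform (x : List ℕ) : Prop := ∀ a ∈ x, ∀ b ∈ x, a = b

/-- x^[k]: add one citation to publication k (1-indexed; append a 1 if k = n+1). -/
def incr (x : List ℕ) (k : ℕ) : List ℕ :=
  if k ≤ x.length then x.set (k - 1) (x.getD (k - 1) 0 + 1) else x ++ [1]

/-- k is the smallest index j with x_j = x_k (taking x_{n+1} = 0);
equivalently all earlier entries are strictly larger. -/
def MinIndex (x : List ℕ) (k : ℕ) : Prop :=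
  1 ≤ k ∧ k ≤ x.length + 1 ∧ ∀ j, 1 ≤ j → j < k → x.getD (k - 1) 0 < x.getD (j - 1) 0


/-!
On a uniform vector `u = (c, …, c)` of length `k`, uniform single citation and scale invariance
force `f u = k c = rec u`. Every `x` dominates the uniform vector `(x_i, …, x_i)` of length `i`
for the index `i` attaining `rec x`, so monotonicity gives `rec x ≤ f x`; conversely uniform
equivalence provides a uniform `u ⊑ x` with `f x = f u = rec u ≤ rec x`, since `rec` is
monotone.
-/

section recIdx

variable {x y : List ℕ}

theorem recIdx_le_iff {m : ℕ} :
    recIdx x ≤ m ↔ ∀ i < x.length, (i + 1) * x.getD i 0 ≤ m := by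
  refine ⟨fun h i hi => le_trans ?_ h, fun h => List.max_le_of_forall_le _ m ?_⟩
  · exact List.le_max_of_le (List.mem_map.2 ⟨i, List.mem_range.2 hi, rfl⟩) le_rfl
  · intro _ hm
    obtain ⟨i, hi, rfl⟩ := List.mem_map.1 hm
    exact h i (List.mem_range.1 hi)

theorem le_recIdx {i : ℕ} (hi : i < x.length) : (i + 1) * x.getD i 0 ≤ recIdx x :=
  recIdx_le_iff.1 le_rfl i hi

theorem exists_recIdx_eq (hx : x ≠ []) :
    ∃ i < x.length, (i + 1) * x.getD i 0 = recIdx x := by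
  have hne : (List.range x.length).map (fun i => (i + 1) * x.getD i 0) ≠ [] := by simpa
  obtain ⟨i, hi, he⟩ := List.mem_map.1 (List.maximum_mem (List.foldr_max_of_ne_nil hne).symm)
  exact ⟨i, List.mem_range.1 hi, he⟩

theorem recIdx_mono (h : Dom x y) : recIdx x ≤ recIdx y :=
  recIdx_le_iff.2 fun i hi =>
    le_trans (Nat.mul_le_mul_left _ (h.2 i hi)) (le_recIdx (lt_of_lt_of_le hi h.1))

theorem recIdx_replicate (k c : ℕ) : recIdx (List.replicate k c) = k * c := by
  refine le_antisymm (recIdx_le_iff.2 fun i hi => ?_) ?_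
  · rw [List.length_replicate] at hi
    rw [List.getD_replicate _ hi]
    exact Nat.mul_le_mul_right c hi
  · cases k with
    | zero => simp
    | succ k => simpa using le_recIdx (x := List.replicate (k + 1) c) (i := k) (by simp)

theorem getD_map_mul (C i : ℕ) :
    (x.map (C * ·)).getD i 0 = C * x.getD i 0 := by
  simp only [List.getD_eq_getElem?_getD, List.getElem?_map]
  cases x[i]? <;> simp

theorem recIdx_map_mul (C : ℕ) :
    recIdx (x.map (C * ·)) = C * recIdx x := by
  refine le_antisymm (recIdx_le_iff.2 fun i hi => ?_) ?_
  · rw [List.length_map] at hi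
    rw [getD_map_mul, Nat.mul_left_comm]
    exact Nat.mul_le_mul_left C (le_recIdx hi)
  · rcases eq_or_ne x [] with rfl | hx
    · simp [recIdx]
    obtain ⟨i, hi, he⟩ := exists_recIdx_eq hx
    rw [← he, Nat.mul_left_comm, ← getD_map_mul]
    exact le_recIdx (by simpa using hi)

end recIdx

theorem CitVec.replicate (k : ℕ) {c : ℕ} (hc : 0 < c) : CitVec (List.replicate k c) :=
  ⟨fun _ ha => List.eq_of_mem_replicate ha ▸ hc,
    List.pairwise_replicate.2 (Or.inr (le_refl c))⟩

theorem CitVec.map_mul {x : List ℕ} (hx : CitVec x) {C : ℕ} (hC : 0 < C) :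
    CitVec (x.map (C * ·)) :=
  ⟨fun _ hb => by
    obtain ⟨a, ha, rfl⟩ := List.mem_map.1 hb
    exact Nat.mul_pos hC (hx.1 a ha),
    hx.2.map _ fun _ _ h => Nat.mul_le_mul_left C h⟩

theorem CitVec.exists_eq_replicate {u : List ℕ} (hu : CitVec u) (hU : Uniform u) :
    ∃ k c, 0 < c ∧ u = List.replicate k c := by
  cases u with
  | nil => exact ⟨0, 1, one_pos, rfl⟩
  | cons c t =>
    exact ⟨_, c, hu.1 c List.mem_cons_self,
      List.eq_replicate_of_mem fun a ha => hU a ha c List.mem_cons_self⟩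

theorem uniform_replicate (k c : ℕ) : Uniform (List.replicate k c) := fun _ ha _ hb =>
  (List.eq_of_mem_replicate ha).trans (List.eq_of_mem_replicate hb).symm

theorem dom_replicate_getD {x : List ℕ} (hx : List.Pairwise (· ≥ ·) x) {i : ℕ}
    (hi : i < x.length) : Dom (List.replicate (i + 1) (x.getD i 0)) x := by
  refine ⟨by simpa using hi, fun j hj => ?_⟩
  rw [List.length_replicate] at hj
  rw [List.getD_replicate _ hj, List.getD_eq_getElem _ _ hi,
    List.getD_eq_getElem _ _ (lt_of_le_of_lt (Nat.le_of_lt_succ hj) hi)]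
  exact hx.rel_get_of_le (a := ⟨j, _⟩) (b := ⟨i, hi⟩) (Nat.le_of_lt_succ hj)

theorem exists_uniform_dom_recIdx_eq {x : List ℕ} (hx : CitVec x) :
    ∃ u, CitVec u ∧ Uniform u ∧ Dom u x ∧ recIdx u = recIdx x := by
  rcases eq_or_ne x [] with rfl | hne
  · exact ⟨[], hx, uniform_replicate 0 0, ⟨le_rfl, fun _ h => absurd h (Nat.not_lt_zero _)⟩, rfl⟩
  obtain ⟨i, hi, he⟩ := exists_recIdx_eq hne
  have hpos : 0 < x.getD i 0 := by
    rw [List.getD_eq_getElem _ _ hi]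
    exact hx.1 _ (List.getElem_mem hi)
  exact ⟨_, CitVec.replicate _ hpos, uniform_replicate _ _, dom_replicate_getD hx.2 hi,
    (recIdx_replicate _ _).trans he⟩

theorem eq_recIdx_of_uniform {f : List ℕ → ℝ}
    (husc : ∀ x, CitVec x → (∀ a ∈ x, a = 1) → f x = x.length)
    (hsi : ∀ x (C : ℕ), CitVec x → 0 < C → f (x.map (C * ·)) = C * f x)
    {u : List ℕ} (hu : CitVec u) (hU : Uniform u) : f u = recIdx u := by
  obtain ⟨k, c, hc, rfl⟩ := hu.exists_eq_replicate hU
  have hones := CitVec.replicate k one_pos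
  calc f (List.replicate k c) = f ((List.replicate k 1).map (c * ·)) := by simp
    _ = c * k := by
      rw [hsi _ c hones hc, husc _ hones fun _ => List.eq_of_mem_replicate,
        List.length_replicate]
    _ = recIdx (List.replicate k c) := by
      rw [recIdx_replicate]
      push_cast
      ring

theorem rec_characterisation_SI_general (f : List ℕ → ℝ) :
    ((∀ x y, CitVec x → CitVec y → Dom x y → f x ≤ f y) ∧
     (∀ x, CitVec x → (∀ a ∈ x, a = 1) → f x = x.length) ∧
     (∀ x C, CitVec x → 0 < C → f (x.map (fun a => C * a)) = C * f x) ∧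
     (∀ x, CitVec x → ∃ u, CitVec u ∧ Uniform u ∧ Dom u x ∧ f x = f u)) ↔
    (∀ x, CitVec x → f x = recIdx x) := by
  constructor
  · rintro ⟨hmono, husc, hsi, hue⟩ x hx
    have hunif (u : List ℕ) := eq_recIdx_of_uniform (u := u) husc hsi
    obtain ⟨u, hu, hU, hux, hrec⟩ := exists_uniform_dom_recIdx_eq hx
    obtain ⟨v, hv, hV, hvx, hfv⟩ := hue x hx
    apply le_antisymm
    · rw [hfv, hunif v hv hV]
      exact_mod_cast recIdx_mono hvx
    · rw [← hrec, ← hunif u hu hU]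
      exact hmono u x hu hx hux
  · intro hrec
    refine ⟨fun x y hx hy hxy => ?_, fun x hx h1 => ?_, fun x C hx hC => ?_, fun x hx => ?_⟩
    · rw [hrec x hx, hrec y hy]
      exact_mod_cast recIdx_mono hxy
    · rw [hrec x hx, List.eq_replicate_of_mem h1, recIdx_replicate]
      simp
    · rw [hrec _ (hx.map_mul hC), hrec x hx, recIdx_map_mul]
      push_cast
      ring
    · obtain ⟨u, hu, hU, hux, h⟩ := exists_uniform_dom_recIdx_eq hx
      exact ⟨u, hu, hU, hux, by rw [hrec x hx, hrec u hu, h]⟩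

theorem rec_characterisation_SI (f : List ℕ → ℝ)
    (hnonneg : ∀ x, CitVec x → 0 ≤ f x) (hbase : f [] = 0) :
    ((∀ x y, CitVec x → CitVec y → Dom x y → f x ≤ f y) ∧
     (∀ x, CitVec x → (∀ a ∈ x, a = 1) → f x = x.length) ∧
     (∀ x C, CitVec x → 0 < C → f (x.map (fun a => C * a)) = C * f x) ∧
     (∀ x, CitVec x → ∃ u, CitVec u ∧ Uniform u ∧ Dom u x ∧ f x = f u)) ↔
    (∀ x, CitVec x → f x = recIdx x) :=
  rec_characterisation_SI_general f
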